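/- arXiv:2405.02056 — 8 statements merged into one kernel-verified Lean document; each statement's English description precedes it below -/
import Mathlib

section
/- If X has more than two points, then for any two distinct vertices f, g of Γ(C(X)) there exists a vertex h of Γ(C(X)), distinct from f and g, that is adjacent to both f and g. -/
open Set

/-- The zero set of a continuous real-valued function. -/
def zeroSet {X : Type*} [TopologicalSpace X] (f : C(X, ℝ)) : Set X := {x | f x = 0}

@[simp] lemma mem_zeroSet {X : Type*} [TopologicalSpace X] (f : C(X, ℝ)) (x : X) :
    x ∈ zeroSet f ↔ f x = 0 := Iff.rfl

/-- The zero-set intersection graph `Γ(C(X))`: vertices are the non-units of `C(X)`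
(those `f` with nonempty zero set), and distinct vertices `f`, `g` are adjacent
iff `Z(f) ∩ Z(g) ≠ ∅`. -/
def zGraph (X : Type*) [TopologicalSpace X] :
    SimpleGraph {f : C(X, ℝ) // (zeroSet f).Nonempty} where
  Adj f g := f ≠ g ∧ (zeroSet f.1 ∩ zeroSet g.1).Nonempty
  symm := ⟨by
    rintro f g ⟨hne, hx⟩
    exact ⟨hne.symm, by rwa [Set.inter_comm]⟩⟩
  loopless := ⟨fun f h => h.1 rfl⟩

/-- If X has more than two points, any two distinct vertices of Γ(C(X)) have a
common neighbour distinct from both. -/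
theorem zGraph_exists_common_neighbor
    (X : Type*) [TopologicalSpace X] [T2Space X] [CompletelyRegularSpace X]
    (hX : ∃ a b c : X, a ≠ b ∧ a ≠ c ∧ b ≠ c)
    (f g : {f : C(X, ℝ) // (zeroSet f).Nonempty}) (hfg : f ≠ g) :
    ∃ h : {f : C(X, ℝ) // (zeroSet f).Nonempty},
      h ≠ f ∧ h ≠ g ∧ (zGraph X).Adj h f ∧ (zGraph X).Adj h g := by
  classical
  obtain ⟨x, hx⟩ := f.2
  obtain ⟨y, hy⟩ := g.2
  have hx : f.1 x = 0 := hx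
  have hy : g.1 y = 0 := hy
  have hfg' : f.1 ≠ g.1 := fun h => hfg (Subtype.ext h)
  by_cases hf0 : f.1 = 0
  · -- f is the zero function; take h = g + g
    have hg0 : g.1 ≠ 0 := fun h => hfg' (hf0.trans h.symm)
    have hgg0 : g.1 + g.1 ≠ 0 := by
      intro h
      apply hg0
      ext t
      have := DFunLike.congr_fun h t
      simp at this ⊢
      linarith
    have hggg : g.1 + g.1 ≠ g.1 := by
      intro h
      apply hg0
      ext t
      have := DFunLike.congr_fun h t
      simp at this ⊢
      linarith
    have hne_f : (⟨g.1 + g.1, ⟨y, by simp [hy]⟩⟩ :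
        {f : C(X, ℝ) // (zeroSet f).Nonempty}) ≠ f :=
      fun h => hgg0 ((congrArg Subtype.val h).trans hf0)
    refine ⟨⟨g.1 + g.1, ⟨y, by simp [hy]⟩⟩, hne_f,
      fun h => hggg (congrArg Subtype.val h),
      ⟨hne_f, ⟨y, by simp [hy, hf0]⟩⟩,
      ⟨fun h => hggg (congrArg Subtype.val h), ⟨y, by simp [hy]⟩⟩⟩
  · by_cases hg0 : g.1 = 0
    · -- g is the zero function; take h = f + f
      have hff0 : f.1 + f.1 ≠ 0 := by
        intro h
        apply hf0
        ext t
        have := DFunLike.congr_fun h t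
        simp at this ⊢
        linarith
      have hfff : f.1 + f.1 ≠ f.1 := by
        intro h
        apply hf0
        ext t
        have := DFunLike.congr_fun h t
        simp at this ⊢
        linarith
      have hne_g : (⟨f.1 + f.1, ⟨x, by simp [hx]⟩⟩ :
          {f : C(X, ℝ) // (zeroSet f).Nonempty}) ≠ g :=
        fun h => hff0 ((congrArg Subtype.val h).trans hg0)
      refine ⟨⟨f.1 + f.1, ⟨x, by simp [hx]⟩⟩,
        fun h => hfff (congrArg Subtype.val h), hne_g,
        ⟨fun h => hfff (congrArg Subtype.val h), ⟨x, by simp [hx]⟩⟩,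
        ⟨hne_g, ⟨x, by simp [hx, hg0]⟩⟩⟩
    · by_cases hp : f.1 * g.1 = 0
      · -- take h = 0
        have hne_f : (⟨0, ⟨x, by simp⟩⟩ :
            {f : C(X, ℝ) // (zeroSet f).Nonempty}) ≠ f :=
          fun h => hf0 (congrArg Subtype.val h).symm
        have hne_g : (⟨0, ⟨x, by simp⟩⟩ :
            {f : C(X, ℝ) // (zeroSet f).Nonempty}) ≠ g :=
          fun h => hg0 (congrArg Subtype.val h).symm
        exact ⟨⟨0, ⟨x, by simp⟩⟩, hne_f, hne_g,
          ⟨hne_f, ⟨x, by simp [hx]⟩⟩, ⟨hne_g, ⟨y, by simp [hy]⟩⟩⟩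
      · -- take h = c • (f*g) for a suitable c ∈ {1,2,3}
        set p : C(X, ℝ) := f.1 * g.1 with hpdef
        obtain ⟨t, ht⟩ : ∃ t, p t ≠ 0 := by
          by_contra hc
          push_neg at hc
          exact hp (ContinuousMap.ext fun t => by simpa using hc t)
        have key : ∀ c₁ c₂ : ℝ, c₁ ≠ c₂ → c₁ • p ≠ c₂ • p := by
          intro c₁ c₂ hne heq
          have := DFunLike.congr_fun heq t
          simp at this
          exact hne (mul_right_cancel₀ ht (by simpa using this))
        have hsub : ∃ c : ℝ, c • p ≠ f.1 ∧ c • p ≠ g.1 := by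
          rcases eq_or_ne ((1:ℝ) • p) f.1 with h1f | h1f
          · rcases eq_or_ne ((2:ℝ) • p) g.1 with h2g | h2g
            · exact ⟨3, fun h => key 3 1 (by norm_num) (h.trans h1f.symm),
                fun h => key 3 2 (by norm_num) (h.trans h2g.symm)⟩
            · exact ⟨2, fun h => key 2 1 (by norm_num) (h.trans h1f.symm), h2g⟩
          · rcases eq_or_ne ((1:ℝ) • p) g.1 with h1g | h1g
            · rcases eq_or_ne ((2:ℝ) • p) f.1 with h2f | h2f
              · exact ⟨3, fun h => key 3 2 (by norm_num) (h.trans h2f.symm),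
                  fun h => key 3 1 (by norm_num) (h.trans h1g.symm)⟩
              · exact ⟨2, h2f, fun h => key 2 1 (by norm_num) (h.trans h1g.symm)⟩
            · exact ⟨1, h1f, h1g⟩
        obtain ⟨c, hcf, hcg⟩ := hsub
        have hxz : (c • p) x = 0 := by simp [hpdef, hx]
        have hyz : (c • p) y = 0 := by simp [hpdef, hy]
        have hne_f : (⟨c • p, ⟨x, hxz⟩⟩ :
            {f : C(X, ℝ) // (zeroSet f).Nonempty}) ≠ f :=
          fun h => hcf (congrArg Subtype.val h)
        have hne_g : (⟨c • p, ⟨x, hxz⟩⟩ :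
            {f : C(X, ℝ) // (zeroSet f).Nonempty}) ≠ g :=
          fun h => hcg (congrArg Subtype.val h)
        exact ⟨⟨c • p, ⟨x, hxz⟩⟩, hne_f, hne_g,
          ⟨hne_f, ⟨x, ⟨hxz, hx⟩⟩⟩, ⟨hne_g, ⟨y, ⟨hyz, hy⟩⟩⟩⟩
end

section
/- Let X have more than two points and let f, g be distinct vertices of Γ(C(X)). Then: (1) d(f,g) = 1 if and only if Z(f) ∩ Z(g) ≠ ∅; (2) d(f,g) = 2 if and only if Z(f) ∩ Z(g) = ∅. -/
open Set

/-- For distinct vertices f, g of Γ(C(X)) (X with more than two points):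
d(f,g) = 1 iff Z(f) ∩ Z(g) ≠ ∅, and d(f,g) = 2 iff Z(f) ∩ Z(g) = ∅. -/
theorem zGraph_dist_eq_one_iff_and_dist_eq_two_iff
    (X : Type*) [TopologicalSpace X] [T2Space X] [CompletelyRegularSpace X]
    (hX : ∃ a b c : X, a ≠ b ∧ a ≠ c ∧ b ≠ c)
    (f g : {f : C(X, ℝ) // (zeroSet f).Nonempty}) (hfg : f ≠ g) :
    ((zGraph X).dist f g = 1 ↔ (zeroSet f.1 ∩ zeroSet g.1).Nonempty) ∧
    ((zGraph X).dist f g = 2 ↔ zeroSet f.1 ∩ zeroSet g.1 = ∅) := by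
  have hadj : ∀ f g : {f : C(X, ℝ) // (zeroSet f).Nonempty}, f ≠ g →
      (zeroSet f.1 ∩ zeroSet g.1).Nonempty → (zGraph X).Adj f g :=
    fun f g h1 h2 => ⟨h1, h2⟩
  constructor
  · rw [SimpleGraph.dist_eq_one_iff_adj]
    exact ⟨fun h => h.2, fun h => ⟨hfg, h⟩⟩
  constructor
  · intro h2
    by_contra hne
    rw [← ne_eq, ← Set.nonempty_iff_ne_empty] at hne
    have := SimpleGraph.dist_eq_one_iff_adj.mpr (hadj f g hfg hne)
    omega
  · intro hempty
    obtain ⟨a, ha⟩ := f.2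
    obtain ⟨b, hb⟩ := g.2
    have hfa : f.1 a = 0 := ha
    have hgb : g.1 b = 0 := hb
    have hZ : (zeroSet (f.1 * g.1)).Nonempty := ⟨a, by simp [zeroSet, hfa]⟩
    set h : {f : C(X, ℝ) // (zeroSet f).Nonempty} := ⟨f.1 * g.1, hZ⟩ with hh
    have hga : g.1 a = 0 → False := fun h0 => by
      have : a ∈ zeroSet f.1 ∩ zeroSet g.1 := ⟨hfa, h0⟩
      rw [hempty] at this; exact this
    have hfb : f.1 b = 0 → False := fun h0 => by
      have : b ∈ zeroSet f.1 ∩ zeroSet g.1 := ⟨h0, hgb⟩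
      rw [hempty] at this; exact this
    have hhf : h ≠ f := by
      intro he
      apply hfb
      have := ContinuousMap.congr_fun (Subtype.ext_iff.mp he) b
      simpa [hgb, hh] using this.symm
    have hhg : h ≠ g := by
      intro he
      apply hga
      have := ContinuousMap.congr_fun (Subtype.ext_iff.mp he) a
      simpa [hfa, hh] using this.symm
    have adj1 : (zGraph X).Adj f h := hadj f h hhf.symm ⟨a, hfa, by simp [zeroSet, hfa, hh]⟩
    have adj2 : (zGraph X).Adj h g := hadj h g hhg ⟨b, by simp [zeroSet, hgb, hh], hgb⟩
    have hle : (zGraph X).dist f g ≤ 2 := by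
      have := SimpleGraph.dist_le (SimpleGraph.Walk.cons adj1 adj2.toWalk)
      simpa using this
    have hpos : 0 < (zGraph X).dist f g :=
      SimpleGraph.Reachable.pos_dist_of_ne ⟨SimpleGraph.Walk.cons adj1 adj2.toWalk⟩ hfg
    have hne1 : (zGraph X).dist f g ≠ 1 := by
      intro h1
      have h2 := (SimpleGraph.dist_eq_one_iff_adj.mp h1).2
      rw [hempty] at h2
      exact Set.not_nonempty_empty h2
    omega
end

section
/- For any space X with more than one point, the graph Γ(C(X)) is both triangulated and hypertriangulated, i.e., every vertex of Γ(C(X)) is a vertex of a triangle and every edge of Γ(C(X)) is an edge of a triangle. -/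
open Set

lemma exists_phi {X : Type*} [TopologicalSpace X] [T2Space X] [CompletelyRegularSpace X]
    [Nontrivial X] (x : X) : ∃ φ : C(X, ℝ), φ x = 0 ∧ φ ≠ 0 := by
  obtain ⟨y, hy⟩ := exists_ne x
  obtain ⟨f, hf, hfx, hfK⟩ := CompletelyRegularSpace.completely_regular x {y}
    isClosed_singleton (by simp [hy.symm])
  refine ⟨⟨fun z => (f z : ℝ), by continuity⟩, by simp [hfx], ?_⟩
  intro h
  have : (f y : ℝ) = 0 := congrFun (congrArg DFunLike.coe h) y
  rw [hfK rfl] at this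
  norm_num at this

/-- For X with more than one point, Γ(C(X)) is triangulated (every vertex lies on a
triangle) and hypertriangulated (every edge lies on a triangle). -/
theorem zGraph_triangulated_and_hypertriangulated
    (X : Type*) [TopologicalSpace X] [T2Space X] [CompletelyRegularSpace X] [Nontrivial X] :
    (∀ f : {f : C(X, ℝ) // (zeroSet f).Nonempty},
      ∃ g h, (zGraph X).Adj f g ∧ (zGraph X).Adj g h ∧ (zGraph X).Adj h f) ∧
    (∀ f g : {f : C(X, ℝ) // (zeroSet f).Nonempty}, (zGraph X).Adj f g →
      ∃ h, (zGraph X).Adj f h ∧ (zGraph X).Adj g h) := by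
  -- helper: pick from candidates (c : ℝ) • φ
  have key : ∀ (f g : C(X, ℝ)) (x : X), f x = 0 → g x = 0 →
      ∃ h : C(X, ℝ), h x = 0 ∧ h ≠ f ∧ h ≠ g := by
    intro f g x hfx hgx
    obtain ⟨φ, hφx, hφ0⟩ := exists_phi x
    have hinj : Function.Injective (fun c : ℝ => c • φ) := by
      intro a b hab
      by_contra hne
      apply hφ0
      have := sub_eq_zero.mpr hab
      rw [← sub_smul] at this
      rcases smul_eq_zero.mp this with h | h
      · exact absurd (sub_eq_zero.mp h) hne
      · exact h
    have : ∃ c ∈ ({0, 1, 2} : Set ℝ), c • φ ≠ f ∧ c • φ ≠ g := by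
      by_contra hc
      push_neg at hc
      have h0 := or_iff_not_imp_left.mpr (hc 0 (by simp))
      have h1 := or_iff_not_imp_left.mpr (hc 1 (by simp))
      have h2 := or_iff_not_imp_left.mpr (hc 2 (by simp))
      -- each of the three distinct elements equals f or g: pigeonhole
      rcases h0 with h0 | h0 <;> rcases h1 with h1 | h1 <;> rcases h2 with h2 | h2 <;>
        first
        | (exact absurd (hinj (h0.trans h1.symm)) (by norm_num))
        | (exact absurd (hinj (h0.trans h2.symm)) (by norm_num))
        | (exact absurd (hinj (h1.trans h2.symm)) (by norm_num))
    obtain ⟨c, _, hcf, hcg⟩ := this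
    exact ⟨c • φ, by simp [hφx], hcf, hcg⟩
  constructor
  · intro f
    obtain ⟨x, hx⟩ := f.2
    have hfx : f.1 x = 0 := hx
    obtain ⟨g, hgx, hgf, _⟩ := key f.1 f.1 x hfx hfx
    obtain ⟨h, hhx, hhf, hhg⟩ := key f.1 g x hfx hgx
    refine ⟨⟨g, x, hgx⟩, ⟨h, x, hhx⟩, ⟨?_, x, hfx, hgx⟩, ⟨?_, x, hgx, hhx⟩,
      ⟨?_, x, hhx, hfx⟩⟩
    · exact fun he => hgf (congrArg Subtype.val he).symm
    · exact fun he => hhg (congrArg Subtype.val he).symm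
    · exact fun he => hhf (congrArg Subtype.val he)
  · rintro f g ⟨hfg, x, hfx, hgx⟩
    obtain ⟨h, hhx, hhf, hhg⟩ := key f.1 g.1 x hfx hgx
    refine ⟨⟨h, x, hhx⟩, ⟨?_, x, hfx, hhx⟩, ⟨?_, x, hgx, hhx⟩⟩
    · exact fun he => hhf (congrArg Subtype.val he).symm
    · exact fun he => hhg (congrArg Subtype.val he).symm
end

section
/- The graph Γ(C(X)) is chordal if and only if X has at most three points. -/
open Set

/-- A cycle (walk) w has a chord: two vertices of w adjacent in G by an edge
which is not an edge of w. -/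
def HasChord {V : Type*} (G : SimpleGraph V) {u : V} (w : G.Walk u u) : Prop :=
  ∃ a b, a ∈ w.support ∧ b ∈ w.support ∧ G.Adj a b ∧ s(a, b) ∉ w.edges

/-- A graph is chordal if every cycle of length greater than three has a chord. -/
def Chordal {V : Type*} (G : SimpleGraph V) : Prop :=
  ∀ (u : V) (w : G.Walk u u), w.IsCycle → 3 < w.length → HasChord G w

open SimpleGraph

lemma walk_support_eq {V : Type*} {G : SimpleGraph V} {u v : V} (p : G.Walk u v) :
    p.support = (List.range (p.length + 1)).map p.getVert := by
  induction p with
  | nil => simp [List.range_succ, Walk.getVert_zero]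
  | cons h q ih =>
    rw [Walk.support_cons, Walk.length_cons, List.range_succ_eq_map (n := q.length + 1),
      List.map_cons, List.map_map]
    simp [Function.comp_def, Walk.getVert_cons_succ, Walk.getVert_zero, ih]

lemma walk_edges_mem {V : Type*} {G : SimpleGraph V} {u v a b : V} (p : G.Walk u v)
    (h : s(a, b) ∈ p.edges) :
    ∃ i < p.length, (p.getVert i = a ∧ p.getVert (i + 1) = b) ∨
      (p.getVert i = b ∧ p.getVert (i + 1) = a) := by
  induction p with
  | nil => simp at h
  | cons hadj q ih =>
    rw [Walk.edges_cons, List.mem_cons] at h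
    rcases h with h | h
    · refine ⟨0, by simp, ?_⟩
      rw [Sym2.eq_iff] at h
      rcases h with ⟨ha, hb⟩ | ⟨ha, hb⟩
      · exact Or.inl ⟨ha.symm ▸ rfl, by simp [Walk.getVert_cons_succ, Walk.getVert_zero, hb]⟩
      · exact Or.inr ⟨hb.symm ▸ rfl, by simp [Walk.getVert_cons_succ, Walk.getVert_zero, ha]⟩
    · obtain ⟨i, hi, hor⟩ := ih h
      exact ⟨i + 1, by simpa using Nat.succ_lt_succ hi,
        by simpa [Walk.getVert_cons_succ] using hor⟩

/-- In a Tychonoff space we can find a continuous real function vanishing at two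
points and equal to 1 at two others. -/
lemma exists_zero_zero_one_one {X : Type*} [TopologicalSpace X] [T2Space X]
    [CompletelyRegularSpace X] (a b c d : X)
    (hac : a ≠ c) (had : a ≠ d) (hbc : b ≠ c) (hbd : b ≠ d) :
    ∃ g : C(X, ℝ), g a = 0 ∧ g b = 0 ∧ g c = 1 ∧ g d = 1 := by
  have hK : IsClosed ({c, d} : Set X) := (Set.toFinite _).isClosed
  obtain ⟨f₁, hf₁cont, hf₁a, hf₁K⟩ :=
    CompletelyRegularSpace.completely_regular a {c, d} hK (by simp [hac, had])
  obtain ⟨f₂, hf₂cont, hf₂b, hf₂K⟩ :=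
    CompletelyRegularSpace.completely_regular b {c, d} hK (by simp [hbc, hbd])
  have hc1 : f₁ c = 1 := hf₁K (by simp)
  have hd1 : f₁ d = 1 := hf₁K (by simp)
  have hc2 : f₂ c = 1 := hf₂K (by simp)
  have hd2 : f₂ d = 1 := hf₂K (by simp)
  refine ⟨⟨fun x => (f₁ x : ℝ) * (f₂ x : ℝ),
    (continuous_subtype_val.comp hf₁cont).mul (continuous_subtype_val.comp hf₂cont)⟩,
    ?_, ?_, ?_, ?_⟩
  · show (f₁ a : ℝ) * (f₂ a : ℝ) = 0
    rw [hf₁a]; norm_num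
  · show (f₁ b : ℝ) * (f₂ b : ℝ) = 0
    rw [hf₂b]; norm_num
  · show (f₁ c : ℝ) * (f₂ c : ℝ) = 1
    rw [hc1, hc2]; norm_num
  · show (f₁ d : ℝ) * (f₂ d : ℝ) = 1
    rw [hd1, hd2]; norm_num

/-- Γ(C(X)) is chordal if and only if X has at most three points. -/
theorem zGraph_chordal_iff
    (X : Type*) [TopologicalSpace X] [T2Space X] [CompletelyRegularSpace X] [Nontrivial X] :
    Chordal (zGraph X) ↔
      ∀ a b c d : X, a = b ∨ a = c ∨ a = d ∨ b = c ∨ b = d ∨ c = d := by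
  constructor
  · -- chordal → at most three points
    intro hch a b c d
    by_contra hcon
    push_neg at hcon
    obtain ⟨hab, hac, had, hbc, hbd, hcd⟩ := hcon
    obtain ⟨g, hga, hgb, hgc, hgd⟩ := exists_zero_zero_one_one a b c d hac had hbc hbd
    obtain ⟨h, hhb, hhc, hha, hhd⟩ := exists_zero_zero_one_one b c a d
      (Ne.symm hab) hbd (Ne.symm hac) hcd
    -- four vertices
    set v1 : {f : C(X, ℝ) // (zeroSet f).Nonempty} := ⟨g, a, hga⟩ with hv1
    set v2 : {f : C(X, ℝ) // (zeroSet f).Nonempty} := ⟨h, b, hhb⟩ with hv2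
    set v3 : {f : C(X, ℝ) // (zeroSet f).Nonempty} :=
      ⟨g - 1, c, by simp [zeroSet, hgc]⟩ with hv3
    set v4 : {f : C(X, ℝ) // (zeroSet f).Nonempty} :=
      ⟨h - 1, a, by simp [zeroSet, hha]⟩ with hv4
    have ne12 : v1 ≠ v2 := fun hEq => by
      have := congrArg (fun f => f.1 a) hEq
      simp [hv1, hv2, hga, hha] at this
    have ne13 : v1 ≠ v3 := fun hEq => by
      have := congrArg (fun f => f.1 c) hEq
      simp [hv1, hv3, hgc] at this
    have ne14 : v1 ≠ v4 := fun hEq => by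
      have := congrArg (fun f => f.1 c) hEq
      rw [hv1, hv4] at this
      simp only [ContinuousMap.sub_apply, ContinuousMap.one_apply] at this
      rw [hgc, hhc] at this; norm_num at this
    have ne23 : v2 ≠ v3 := fun hEq => by
      have := congrArg (fun f => f.1 b) hEq
      rw [hv2, hv3] at this
      simp only [ContinuousMap.sub_apply, ContinuousMap.one_apply] at this
      rw [hhb, hgb] at this; norm_num at this
    have ne24 : v2 ≠ v4 := fun hEq => by
      have := congrArg (fun f => f.1 a) hEq
      simp [hv2, hv4, hha] at this
    have ne34 : v3 ≠ v4 := fun hEq => by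
      have := congrArg (fun f => f.1 a) hEq
      rw [hv3, hv4] at this
      simp only [ContinuousMap.sub_apply, ContinuousMap.one_apply] at this
      rw [hga, hha] at this; norm_num at this
    have a12 : (zGraph X).Adj v1 v2 := ⟨ne12, b, hgb, hhb⟩
    have a23 : (zGraph X).Adj v2 v3 := ⟨ne23, c, hhc, by simp [hv3, zeroSet, hgc]⟩
    have a34 : (zGraph X).Adj v3 v4 :=
      ⟨ne34, d, by simp [hv3, zeroSet, hgd], by simp [hv4, zeroSet, hhd]⟩
    have a41 : (zGraph X).Adj v4 v1 := ⟨ne14.symm, a, by simp [hv4, zeroSet, hha], hga⟩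
    have disj13 : ∀ x : X, x ∈ zeroSet v1.1 → x ∈ zeroSet v3.1 → False := by
      intro x hx1 hx3
      simp [hv1, hv3, zeroSet] at hx1 hx3
      rw [hx1] at hx3; norm_num at hx3
    have disj24 : ∀ x : X, x ∈ zeroSet v2.1 → x ∈ zeroSet v4.1 → False := by
      intro x hx2 hx4
      simp [hv2, hv4, zeroSet] at hx2 hx4
      rw [hx2] at hx4; norm_num at hx4
    let w : (zGraph X).Walk v1 v1 :=
      .cons a12 (.cons a23 (.cons a34 (.cons a41 .nil)))
    have hcyc : w.IsCycle := by
      rw [Walk.cons_isCycle_iff]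
      constructor
      · rw [Walk.isPath_def]
        simp [Walk.support_cons, Walk.support_nil, List.nodup_cons,
          ne23, ne24, Ne.symm ne12, ne34, Ne.symm ne13, Ne.symm ne14]
      · simp [Walk.edges_cons, Walk.edges_nil, Sym2.eq_iff, ne12, ne13, ne14, ne23, ne24]
    have hlen : 3 < w.length := by simp [w]
    obtain ⟨A, B, hA, hB, hAdj, hE⟩ := hch v1 w hcyc hlen
    have hAmem : A = v1 ∨ A = v2 ∨ A = v3 ∨ A = v4 := by
      simp only [w, Walk.support_cons, Walk.support_nil, List.mem_cons] at hA
      rcases hA with h | h | h | h | h | h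
      exacts [Or.inl h, Or.inr (Or.inl h), Or.inr (Or.inr (Or.inl h)),
        Or.inr (Or.inr (Or.inr h)), Or.inl h, by simp at h]
    have hBmem : B = v1 ∨ B = v2 ∨ B = v3 ∨ B = v4 := by
      simp only [w, Walk.support_cons, Walk.support_nil, List.mem_cons] at hB
      rcases hB with h | h | h | h | h | h
      exacts [Or.inl h, Or.inr (Or.inl h), Or.inr (Or.inr (Or.inl h)),
        Or.inr (Or.inr (Or.inr h)), Or.inl h, by simp at h]
    have hEdges : s(A, B) ∉ ([s(v1,v2), s(v2,v3), s(v3,v4), s(v4,v1)] :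
        List (Sym2 _)) := by simpa only [w, Walk.edges_cons, Walk.edges_nil] using hE
    rcases hAmem with rfl | rfl | rfl | rfl <;> rcases hBmem with rfl | rfl | rfl | rfl
    all_goals first
      | exact hAdj.1 rfl
      | (obtain ⟨x, hx1, hx2⟩ := hAdj.2; first
          | exact disj13 x hx1 hx2 | exact disj13 x hx2 hx1
          | exact disj24 x hx1 hx2 | exact disj24 x hx2 hx1)
      | exact hEdges (List.mem_cons.mpr (Or.inl rfl))
      | exact hEdges (List.mem_cons.mpr (Or.inl Sym2.eq_swap))
      | exact hEdges (List.mem_cons_of_mem _ (List.mem_cons.mpr (Or.inl rfl)))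
      | exact hEdges (List.mem_cons_of_mem _ (List.mem_cons.mpr (Or.inl Sym2.eq_swap)))
      | exact hEdges (List.mem_cons_of_mem _ (List.mem_cons_of_mem _ (List.mem_cons.mpr (Or.inl rfl))))
      | exact hEdges (List.mem_cons_of_mem _ (List.mem_cons_of_mem _ (List.mem_cons.mpr (Or.inl Sym2.eq_swap))))
      | exact hEdges (List.mem_cons_of_mem _ (List.mem_cons_of_mem _ (List.mem_cons_of_mem _ (List.mem_cons.mpr (Or.inl rfl)))))
      | exact hEdges (List.mem_cons_of_mem _ (List.mem_cons_of_mem _ (List.mem_cons_of_mem _ (List.mem_cons.mpr (Or.inl Sym2.eq_swap)))))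
  · -- at most three points → chordal
    intro H u w hw hlen
    by_contra hch
    unfold HasChord at hch
    push_neg at hch
    set n := w.length with hn
    have hn4 : 4 ≤ n := hlen
    set v : ℕ → {f : C(X, ℝ) // (zeroSet f).Nonempty} := w.getVert with hv
    set Z : ℕ → Set X := fun i => zeroSet (v i).1 with hZ
    -- injectivity of getVert on indices
    have hinj : ∀ x ∈ List.range n, ∀ y ∈ List.range n,
        v (x + 1) = v (y + 1) → x = y := by
      have h1 := hw.support_nodup
      rw [walk_support_eq, List.range_succ_eq_map, List.map_cons, List.tail_cons,
        List.map_map] at h1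
      exact (List.nodup_map_iff_inj_on (List.nodup_range (n := n))).mp h1
    have idx : ∀ i j, i ≤ n → j ≤ n → v i = v j →
        i = j ∨ (i = 0 ∧ j = n) ∨ (i = n ∧ j = 0) := by
      intro i j hi hj hij
      have h0n : v 0 = v n := by
        rw [hv, hn, Walk.getVert_zero, Walk.getVert_length]
      rcases Nat.eq_zero_or_pos i with rfl | hi0
      · rcases Nat.eq_zero_or_pos j with rfl | hj0
        · exact Or.inl rfl
        · have : v n = v j := h0n ▸ hij
          have := hinj (n - 1) (by simp; omega) (j - 1) (by simp; omega)
            (by rw [Nat.sub_add_cancel (by omega), Nat.sub_add_cancel (by omega)]; exact this)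
          right; left; omega
      · rcases Nat.eq_zero_or_pos j with rfl | hj0
        · have h2 : v i = v n := hij.trans h0n
          have := hinj (i - 1) (by simp; omega) (n - 1) (by simp; omega)
            (by rw [Nat.sub_add_cancel (by omega), Nat.sub_add_cancel (by omega)]; exact h2)
          right; right; omega
        · have := hinj (i - 1) (by simp; omega) (j - 1) (by simp; omega)
            (by rw [Nat.sub_add_cancel (by omega), Nat.sub_add_cancel (by omega)]; exact hij)
          left; omega
    have hsup : ∀ i, i ≤ n → v i ∈ w.support := fun i hi =>
      Walk.mem_support_iff_exists_getVert.mpr ⟨i, rfl, hi⟩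
    have nonadj : ∀ i j, i < j → j < n → j ≠ i + 1 → ¬(i = 0 ∧ j = n - 1) →
        ∀ x : X, x ∈ Z i → x ∈ Z j → False := by
      intro i j h1 h2 h3 h4 x hxi hxj
      have hvij : v i ≠ v j := by
        intro hEq
        rcases idx i j (by omega) (by omega) hEq with h | h | h <;> omega
      have hadj : (zGraph X).Adj (v i) (v j) := ⟨hvij, x, hxi, hxj⟩
      have hmem := hch (v i) (v j) (hsup i (by omega)) (hsup j (by omega)) hadj
      obtain ⟨k, hk, hor⟩ := walk_edges_mem w hmem
      rcases hor with ⟨hk1, hk2⟩ | ⟨hk1, hk2⟩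
      · rcases idx k i (by omega) (by omega) hk1 with h | h | h <;>
        rcases idx (k + 1) j (by omega) (by omega) hk2 with h' | h' | h' <;> omega
      · rcases idx k j (by omega) (by omega) hk1 with h | h | h <;>
        rcases idx (k + 1) i (by omega) (by omega) hk2 with h' | h' | h' <;> omega
    have hcons : ∀ i j, j = i + 1 → i < n → ∃ x, x ∈ Z i ∧ x ∈ Z j := by
      rintro i j rfl hi
      obtain ⟨x, hx⟩ := (w.adj_getVert_succ hi).2
      exact ⟨x, hx.1, hx.2⟩
    obtain ⟨x, hx0, hx1⟩ := hcons 0 1 rfl (by omega)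
    obtain ⟨y, hy1, hy2⟩ := hcons 1 2 rfl (by omega)
    obtain ⟨z, hz2, hz3⟩ := hcons 2 3 rfl (by omega)
    rcases eq_or_lt_of_le hn4 with h4 | h5
    · -- n = 4
      obtain ⟨p, hp3, hp4⟩ := hcons 3 4 rfl (by omega)
      have h40 : v 4 = v 0 := by
        rw [hv, h4, hn, Walk.getVert_length, Walk.getVert_zero]
      have hp0 : p ∈ Z 0 := by
        have hZ40 : Z 4 = Z 0 := congrArg (fun t => zeroSet t.1) h40
        rw [← hZ40]; exact hp4
      have hxy : x ≠ y := fun hEq => nonadj 0 2 (by omega) (by omega) (by omega)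
        (by omega) x hx0 (hEq ▸ hy2)
      have hxz : x ≠ z := fun hEq => nonadj 1 3 (by omega) (by omega) (by omega)
        (by omega) x hx1 (hEq ▸ hz3)
      have hxp : x ≠ p := fun hEq => nonadj 1 3 (by omega) (by omega) (by omega)
        (by omega) x hx1 (hEq ▸ hp3)
      have hyz : y ≠ z := fun hEq => nonadj 1 3 (by omega) (by omega) (by omega)
        (by omega) y hy1 (hEq ▸ hz3)
      have hyp : y ≠ p := fun hEq => nonadj 0 2 (by omega) (by omega) (by omega)
        (by omega) p hp0 (hEq ▸ hy2)
      have hzp : z ≠ p := fun hEq => nonadj 0 2 (by omega) (by omega) (by omega)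
        (by omega) p hp0 (hEq ▸ hz2)
      rcases H x y z p with h | h | h | h | h | h
      exacts [hxy h, hxz h, hxp h, hyz h, hyp h, hzp h]
    · -- n ≥ 5
      obtain ⟨p, hp4⟩ := (v 4).2
      have hp4' : p ∈ Z 4 := hp4
      have hxy : x ≠ y := fun hEq => nonadj 0 2 (by omega) (by omega) (by omega)
        (by omega) x hx0 (hEq ▸ hy2)
      have hxz : x ≠ z := fun hEq => nonadj 0 3 (by omega) (by omega) (by omega)
        (by omega) x hx0 (hEq ▸ hz3)
      have hyz : y ≠ z := fun hEq => nonadj 1 3 (by omega) (by omega) (by omega)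
        (by omega) y hy1 (hEq ▸ hz3)
      have hxp : x ≠ p := fun hEq => nonadj 1 4 (by omega) (by omega) (by omega)
        (by omega) x hx1 (hEq ▸ hp4')
      have hyp : y ≠ p := fun hEq => nonadj 1 4 (by omega) (by omega) (by omega)
        (by omega) y hy1 (hEq ▸ hp4')
      have hzp : z ≠ p := fun hEq => nonadj 2 4 (by omega) (by omega) (by omega)
        (by omega) z hz2 (hEq ▸ hp4')
      rcases H x y z p with h | h | h | h | h | h
      exacts [hxy h, hxz h, hxp h, hyz h, hyp h, hzp h]
end

section
/- Let X have more than two points and let [f₁,f₂] and [g₁,g₂] be distinct vertices of the line graph L(Γ(C(X))). Then there exists a vertex [h₁,h₂] of L(Γ(C(X))) adjacent to both [f₁,f₂] and [g₁,g₂] if and only if Z(f_i) ∩ Z(g_j) ≠ ∅ for some i, j ∈ {1,2}. -/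
open Set

/-!
A common neighbour of two edges of a graph must meet each of them, so it contains a vertex
`v` of the first and a vertex `u` of the second with `v = u` or `v` adjacent to `u`; in `Γ(C(X))`
either way gives `Z(v) ∩ Z(u) ≠ ∅`. Conversely, let `x ∈ Z(f_i) ∩ Z(g_j)`. Since `f₀ ≠ f₁` share a
zero, `f₀ - f₁` is not constant, so `h = f₀ - f₁ - (f₀ - f₁)(x)` is a nonzero function vanishing at
`x`, and its multiples `c • h` provide a vertex `w` through `x` outside both edges. Then one of
`[f_i, w]`, `[g_j, w]`, `[f_i, g_j]` is a common neighbour.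
-/

namespace SimpleGraph

variable {V : Type*} {G : SimpleGraph V}

lemma lineGraph_adj_of_mem_of_notMem {e d : G.edgeSet} {v w : V} (hve : v ∈ (e : Sym2 V))
    (hvd : v ∈ (d : Sym2 V)) (hwe : w ∈ (e : Sym2 V)) (hwd : w ∉ (d : Sym2 V)) :
    G.lineGraph.Adj e d :=
  lineGraph_adj_iff_exists.mpr ⟨fun h => hwd (h ▸ hwe), v, hve, hvd⟩

lemma lineGraph_adj_mk_of_mem_of_notMem {d : G.edgeSet} {v w : V} (hvw : G.Adj v w)
    (hvd : v ∈ (d : Sym2 V)) (hwd : w ∉ (d : Sym2 V)) :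
    G.lineGraph.Adj ⟨s(v, w), hvw⟩ d :=
  lineGraph_adj_of_mem_of_notMem (Sym2.mem_mk_left v w) hvd (Sym2.mem_mk_right v w) hwd

lemma exists_eq_or_adj_of_lineGraph_adj {e d₁ d₂ : G.edgeSet}
    (h₁ : G.lineGraph.Adj e d₁) (h₂ : G.lineGraph.Adj e d₂) :
    ∃ v ∈ (d₁ : Sym2 V), ∃ u ∈ (d₂ : Sym2 V), v = u ∨ G.Adj v u := by
  obtain ⟨-, v, hve, hv⟩ := lineGraph_adj_iff_exists.mp h₁
  obtain ⟨-, u, hue, hu⟩ := lineGraph_adj_iff_exists.mp h₂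
  refine ⟨v, hv, u, hu, or_iff_not_imp_left.mpr fun hvu => ?_⟩
  have he : (e : Sym2 V) = s(v, u) := (Sym2.mem_and_mem_iff hvu).mp ⟨hve, hue⟩
  exact G.mem_edgeSet.mp (he ▸ e.2)

lemma exists_lineGraph_common_neighbor {d₁ d₂ : G.edgeSet} {v u w : V}
    (hv : v ∈ (d₁ : Sym2 V)) (hu : u ∈ (d₂ : Sym2 V)) (hvu : v ≠ u → G.Adj v u)
    (hw₁ : w ∉ (d₁ : Sym2 V)) (hw₂ : w ∉ (d₂ : Sym2 V)) (hvw : G.Adj v w) (huw : G.Adj u w) :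
    ∃ e : G.edgeSet, G.lineGraph.Adj e d₁ ∧ G.lineGraph.Adj e d₂ := by
  by_cases hv₂ : v ∈ (d₂ : Sym2 V)
  · exact ⟨_, lineGraph_adj_mk_of_mem_of_notMem hvw hv hw₁,
      lineGraph_adj_mk_of_mem_of_notMem hvw hv₂ hw₂⟩
  by_cases hu₁ : u ∈ (d₁ : Sym2 V)
  · exact ⟨_, lineGraph_adj_mk_of_mem_of_notMem huw hu₁ hw₁,
      lineGraph_adj_mk_of_mem_of_notMem huw hu hw₂⟩
  have hvu : G.Adj v u := hvu fun h => hv₂ (h ▸ hu)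
  exact ⟨_, lineGraph_adj_mk_of_mem_of_notMem hvu hv hu₁,
    lineGraph_adj_of_mem_of_notMem (Sym2.mem_mk_right v u) hu (Sym2.mem_mk_left v u) hv₂⟩

end SimpleGraph

lemma Sym2.mem_mk_fin_two_iff {α : Type*} {f : Fin 2 → α} {a : α} :
    a ∈ s(f 0, f 1) ↔ ∃ i, f i = a := by
  simp [Sym2.mem_iff, Fin.exists_fin_two, eq_comm]

section zGraph

variable {X : Type*} [TopologicalSpace X]

lemma infinite_setOf_mem_zeroSet {u : C(X, ℝ)} {a b : X} (hab : u a ≠ u b) (x : X) :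
    {w : {f : C(X, ℝ) // (zeroSet f).Nonempty} | x ∈ zeroSet w.1}.Infinite := by
  set h : C(X, ℝ) := u - ContinuousMap.const X (u x)
  have hx : h x = 0 := sub_self (u x)
  have h_ne : h ≠ 0 := fun h0 => by
    have hu : u = ContinuousMap.const X (u x) := sub_eq_zero.mp h0
    exact hab ((DFunLike.congr_fun hu a).trans (DFunLike.congr_fun hu b).symm)
  have hcx (c : ℝ) : x ∈ zeroSet (c • h) := by simp [zeroSet, hx]
  exact Set.infinite_of_injective_forall_mem
    (f := fun c : ℝ => (⟨c • h, x, hcx c⟩ : {f : C(X, ℝ) // (zeroSet f).Nonempty}))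
    (fun c c' hcc' => smul_left_injective ℝ h_ne (congrArg Subtype.val hcc')) hcx

lemma zGraph.infinite_setOf_mem_zeroSet_of_adj {v v' : {f : C(X, ℝ) // (zeroSet f).Nonempty}}
    (hadj : (zGraph X).Adj v v') (x : X) :
    {w : {f : C(X, ℝ) // (zeroSet f).Nonempty} | x ∈ zeroSet w.1}.Infinite := by
  obtain ⟨hne, z, hz, hz'⟩ := hadj
  obtain ⟨a, ha⟩ : ∃ a, v.1 a ≠ v'.1 a := by
    by_contra! h
    exact hne (Subtype.ext (ContinuousMap.ext h))
  refine infinite_setOf_mem_zeroSet (u := v.1 - v'.1) (a := a) (b := z) ?_ x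
  simpa [show v.1 z = 0 from hz, show v'.1 z = 0 from hz', sub_eq_zero] using ha

end zGraph

theorem lineGraph_exists_common_neighbor_iff_general
    (X : Type*) [TopologicalSpace X]
    (f g : Fin 2 → {f : C(X, ℝ) // (zeroSet f).Nonempty})
    (hf : (zGraph X).Adj (f 0) (f 1)) (hg : (zGraph X).Adj (g 0) (g 1)) :
    (∃ e : (zGraph X).edgeSet,
        (zGraph X).lineGraph.Adj e ⟨s(f 0, f 1), (zGraph X).mem_edgeSet.mpr hf⟩ ∧
        (zGraph X).lineGraph.Adj e ⟨s(g 0, g 1), (zGraph X).mem_edgeSet.mpr hg⟩) ↔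
      ∃ i j : Fin 2, (zeroSet (f i).1 ∩ zeroSet (g j).1).Nonempty := by
  constructor
  · rintro ⟨e, hef, heg⟩
    obtain ⟨v, hv, u, hu, hvu⟩ := SimpleGraph.exists_eq_or_adj_of_lineGraph_adj hef heg
    obtain ⟨i, rfl⟩ := Sym2.mem_mk_fin_two_iff.mp hv
    obtain ⟨j, rfl⟩ := Sym2.mem_mk_fin_two_iff.mp hu
    refine ⟨i, j, ?_⟩
    rcases hvu with hvu | hvu
    · simpa [hvu] using (g j).2
    · exact hvu.2
  · rintro ⟨i, j, x, hxf, hxg⟩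
    obtain ⟨w, hwx, hw⟩ := (zGraph.infinite_setOf_mem_zeroSet_of_adj hf x).exists_notMem_finite
      (Set.toFinite {f 0, f 1, g 0, g 1})
    simp only [Set.mem_insert_iff, Set.mem_singleton_iff, not_or] at hw
    have hwf : w ∉ s(f 0, f 1) := by simp [Sym2.mem_iff, hw.1, hw.2.1]
    have hwg : w ∉ s(g 0, g 1) := by simp [Sym2.mem_iff, hw.2.2.1, hw.2.2.2]
    have hfi : f i ∈ s(f 0, f 1) := Sym2.mem_mk_fin_two_iff.mpr ⟨i, rfl⟩
    have hgj : g j ∈ s(g 0, g 1) := Sym2.mem_mk_fin_two_iff.mpr ⟨j, rfl⟩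
    exact SimpleGraph.exists_lineGraph_common_neighbor hfi hgj (fun h => ⟨h, x, hxf, hxg⟩)
      hwf hwg ⟨fun h => hwf (h ▸ hfi), x, hxf, hwx⟩ ⟨fun h => hwg (h ▸ hgj), x, hxg, hwx⟩

/-- For X with more than two points and distinct vertices [f₁,f₂], [g₁,g₂] of the line
graph of Γ(C(X)): a common neighbour exists iff Z(f_i) ∩ Z(g_j) ≠ ∅ for some i, j. -/
theorem lineGraph_exists_common_neighbor_iff
    (X : Type*) [TopologicalSpace X] [T2Space X] [CompletelyRegularSpace X]
    (hX : ∃ a b c : X, a ≠ b ∧ a ≠ c ∧ b ≠ c)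
    (f g : Fin 2 → {f : C(X, ℝ) // (zeroSet f).Nonempty})
    (hf : (zGraph X).Adj (f 0) (f 1)) (hg : (zGraph X).Adj (g 0) (g 1))
    (hne : s(f 0, f 1) ≠ s(g 0, g 1)) :
    (∃ e : (zGraph X).edgeSet,
        (zGraph X).lineGraph.Adj e ⟨s(f 0, f 1), (zGraph X).mem_edgeSet.mpr hf⟩ ∧
        (zGraph X).lineGraph.Adj e ⟨s(g 0, g 1), (zGraph X).mem_edgeSet.mpr hg⟩) ↔
      ∃ i j : Fin 2, (zeroSet (f i).1 ∩ zeroSet (g j).1).Nonempty :=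
  lineGraph_exists_common_neighbor_iff_general X f g hf hg
end

section
/- Let X have more than two points and let [f₁,f₂] and [g₁,g₂] be distinct vertices of L(Γ(C(X))). Then: (1) d([f₁,f₂],[g₁,g₂]) = 1 if and only if f_i = g_j for some i, j ∈ {1,2}; (2) d([f₁,f₂],[g₁,g₂]) = 2 if and only if f_i ≠ g_j for all i, j ∈ {1,2} and Z(f_i) ∩ Z(g_j) ≠ ∅ for some i, j ∈ {1,2}; (3) d([f₁,f₂],[g₁,g₂]) = 3 if and only if f_i ≠ g_j for all i, j ∈ {1,2} and Z(f_i) ∩ Z(g_j) = ∅ for all i, j ∈ {1,2}. -/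
open Set

section Aux

variable {X : Type*} [TopologicalSpace X]

lemma zGraph_adj_iff {a b : {f : C(X, ℝ) // (zeroSet f).Nonempty}} :
    (zGraph X).Adj a b ↔ a ≠ b ∧ (zeroSet a.1 ∩ zeroSet b.1).Nonempty := Iff.rfl

end Aux

/-- Distances in the line graph of Γ(C(X)) between distinct vertices [f₁,f₂], [g₁,g₂],
for X with more than two points. -/
theorem lineGraph_dist
    (X : Type*) [TopologicalSpace X] [T2Space X] [CompletelyRegularSpace X]
    (hX : ∃ a b c : X, a ≠ b ∧ a ≠ c ∧ b ≠ c)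
    (f g : Fin 2 → {f : C(X, ℝ) // (zeroSet f).Nonempty})
    (hf : (zGraph X).Adj (f 0) (f 1)) (hg : (zGraph X).Adj (g 0) (g 1))
    (hne : s(f 0, f 1) ≠ s(g 0, g 1)) :
    ((zGraph X).lineGraph.dist ⟨s(f 0, f 1), (zGraph X).mem_edgeSet.mpr hf⟩
        ⟨s(g 0, g 1), (zGraph X).mem_edgeSet.mpr hg⟩ = 1 ↔
      ∃ i j : Fin 2, f i = g j) ∧
    ((zGraph X).lineGraph.dist ⟨s(f 0, f 1), (zGraph X).mem_edgeSet.mpr hf⟩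
        ⟨s(g 0, g 1), (zGraph X).mem_edgeSet.mpr hg⟩ = 2 ↔
      (∀ i j : Fin 2, f i ≠ g j) ∧
        ∃ i j : Fin 2, (zeroSet (f i).1 ∩ zeroSet (g j).1).Nonempty) ∧
    ((zGraph X).lineGraph.dist ⟨s(f 0, f 1), (zGraph X).mem_edgeSet.mpr hf⟩
        ⟨s(g 0, g 1), (zGraph X).mem_edgeSet.mpr hg⟩ = 3 ↔
      (∀ i j : Fin 2, f i ≠ g j) ∧
        ∀ i j : Fin 2, zeroSet (f i).1 ∩ zeroSet (g j).1 = ∅) := by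
  clear hX
  set G := zGraph X with hG
  set u : G.edgeSet := ⟨s(f 0, f 1), (zGraph X).mem_edgeSet.mpr hf⟩ with hu
  set v : G.edgeSet := ⟨s(g 0, g 1), (zGraph X).mem_edgeSet.mpr hg⟩ with hv
  have huv : u ≠ v := fun h => hne (congrArg Subtype.val h)
  -- membership facts
  have hmemu : ∀ i : Fin 2, f i ∈ (u : Sym2 _) := by
    intro i; fin_cases i <;> simp [hu]
  have hmemv : ∀ j : Fin 2, g j ∈ (v : Sym2 _) := by
    intro j; fin_cases j <;> simp [hv]
  have hmemu' : ∀ w, w ∈ (u : Sym2 _) → ∃ i, w = f i := by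
    intro w hw
    rw [hu] at hw
    rcases Sym2.mem_iff.mp hw with h | h
    · exact ⟨0, h⟩
    · exact ⟨1, h⟩
  have hmemv' : ∀ w, w ∈ (v : Sym2 _) → ∃ j, w = g j := by
    intro w hw
    rw [hv] at hw
    rcases Sym2.mem_iff.mp hw with h | h
    · exact ⟨0, h⟩
    · exact ⟨1, h⟩
  -- adjacency characterization in the line graph
  have hAdjIff : G.lineGraph.Adj u v ↔ ∃ i j : Fin 2, f i = g j := by
    rw [SimpleGraph.lineGraph_adj_iff_exists]
    constructor
    · rintro ⟨-, w, hw1, hw2⟩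
      obtain ⟨i, rfl⟩ := hmemu' w hw1
      obtain ⟨j, hj⟩ := hmemv' _ hw2
      exact ⟨i, j, hj⟩
    · rintro ⟨i, j, hij⟩
      exact ⟨huv, f i, hmemu i, hij ▸ hmemv j⟩
  by_cases hA : ∃ i j : Fin 2, f i = g j
  · -- distance one
    have hd : G.lineGraph.dist u v = 1 :=
      SimpleGraph.dist_eq_one_iff_adj.mpr (hAdjIff.mpr hA)
    obtain ⟨i, j, hij⟩ := hA
    refine ⟨iff_of_true hd ⟨i, j, hij⟩, ?_, ?_⟩ <;>
      exact iff_of_false (by change ¬ G.lineGraph.dist u v = _; omega) (fun h => h.1 i j hij)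
  · have hfg : ∀ i j : Fin 2, f i ≠ g j := fun i j h => hA ⟨i, j, h⟩
    have hd1 : G.lineGraph.dist u v ≠ 1 := fun h =>
      hA (hAdjIff.mp (SimpleGraph.dist_eq_one_iff_adj.mp h))
    by_cases hB : ∃ i j : Fin 2, (zeroSet (f i).1 ∩ zeroSet (g j).1).Nonempty
    · -- distance two
      obtain ⟨i, j, hij⟩ := hB
      have hadj : G.Adj (f i) (g j) := ⟨hfg i j, hij⟩
      set e : G.edgeSet := ⟨s(f i, g j), G.mem_edgeSet.mpr hadj⟩ with he
      have hue : G.lineGraph.Adj u e := by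
        rw [SimpleGraph.lineGraph_adj_iff_exists]
        refine ⟨fun h => ?_, f i, hmemu i, by simp [he]⟩
        have : g j ∈ (u : Sym2 _) := by rw [h]; simp [he]
        obtain ⟨k, hk⟩ := hmemu' _ this
        exact hfg k j hk.symm
      have hev : G.lineGraph.Adj e v := by
        rw [SimpleGraph.lineGraph_adj_iff_exists]
        refine ⟨fun h => ?_, g j, by simp [he], hmemv j⟩
        have : f i ∈ (v : Sym2 _) := by rw [← h]; simp [he]
        obtain ⟨k, hk⟩ := hmemv' _ this
        exact hfg i k hk
      have hle : G.lineGraph.dist u v ≤ 2 := by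
        have := SimpleGraph.dist_le
          (SimpleGraph.Walk.cons hue (SimpleGraph.Walk.cons hev SimpleGraph.Walk.nil))
        simpa using this
      have hd0 : G.lineGraph.dist u v ≠ 0 := by
        intro h0
        rcases SimpleGraph.dist_eq_zero_iff_eq_or_not_reachable.mp h0 with h | h
        · exact huv h
        · exact h ⟨SimpleGraph.Walk.cons hue (SimpleGraph.Walk.cons hev SimpleGraph.Walk.nil)⟩
      have hd : G.lineGraph.dist u v = 2 := by omega
      refine ⟨iff_of_false (by change ¬ G.lineGraph.dist u v = _; omega) (fun h => hA h), iff_of_true hd ⟨hfg, i, j, hij⟩,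
        iff_of_false (by change ¬ G.lineGraph.dist u v = _; omega) (fun h => (Set.nonempty_iff_ne_empty.mp hij) (h.2 i j))⟩
    · -- distance three
      push_neg at hB
      have hC : ∀ i j : Fin 2, zeroSet (f i).1 ∩ zeroSet (g j).1 = ∅ := hB
      obtain ⟨x, hx⟩ := (f 0).2
      obtain ⟨y, hy⟩ := (g 0).2
      set w : {f : C(X, ℝ) // (zeroSet f).Nonempty} :=
        ⟨(f 0).1 * (g 0).1, ⟨x, by simp [zeroSet] at hx ⊢; left; exact hx⟩⟩ with hw
      have hwzf : x ∈ zeroSet w.1 := by simp [hw, zeroSet] at hx ⊢; left; exact hx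
      have hwzg : y ∈ zeroSet w.1 := by simp [hw, zeroSet] at hy ⊢; right; exact hy
      -- w is distinct from all four vertices
      have hwf : ∀ i : Fin 2, w ≠ f i := by
        intro i h
        have : (f i).1 y = 0 := by
          rw [← h]; simp [hw, zeroSet] at hy ⊢; right; exact hy
        have : y ∈ zeroSet (f i).1 ∩ zeroSet (g 0).1 := ⟨this, hy⟩
        rw [hC i 0] at this
        exact this
      have hwg : ∀ j : Fin 2, w ≠ g j := by
        intro j h
        have : (g j).1 x = 0 := by
          rw [← h]; simp [hw, zeroSet] at hx ⊢; left; exact hx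
        have : x ∈ zeroSet (f 0).1 ∩ zeroSet (g j).1 := ⟨hx, this⟩
        rw [hC 0 j] at this
        exact this
      have hadj1 : G.Adj (f 0) w := ⟨(hwf 0).symm, ⟨x, hx, hwzf⟩⟩
      have hadj2 : G.Adj w (g 0) := ⟨hwg 0, ⟨y, hwzg, hy⟩⟩
      set e1 : G.edgeSet := ⟨s(f 0, w), G.mem_edgeSet.mpr hadj1⟩ with he1
      set e2 : G.edgeSet := ⟨s(w, g 0), G.mem_edgeSet.mpr hadj2⟩ with he2
      have hue1 : G.lineGraph.Adj u e1 := by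
        rw [SimpleGraph.lineGraph_adj_iff_exists]
        refine ⟨fun h => ?_, f 0, hmemu 0, by simp [he1]⟩
        have : w ∈ (u : Sym2 _) := by rw [h]; simp [he1]
        obtain ⟨k, hk⟩ := hmemu' _ this
        exact hwf k hk
      have he12 : G.lineGraph.Adj e1 e2 := by
        rw [SimpleGraph.lineGraph_adj_iff_exists]
        refine ⟨fun h => ?_, w, by simp [he1], by simp [he2]⟩
        have h' : s(f 0, w) = s(w, g 0) := congrArg Subtype.val h
        rcases Sym2.eq_iff.mp h' with ⟨h1, h2⟩ | ⟨h1, h2⟩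
        · exact hwf 0 h1.symm
        · exact hfg 0 0 h1
      have he2v : G.lineGraph.Adj e2 v := by
        rw [SimpleGraph.lineGraph_adj_iff_exists]
        refine ⟨fun h => ?_, g 0, by simp [he2], hmemv 0⟩
        have : w ∈ (v : Sym2 _) := by rw [← h]; simp [he2]
        obtain ⟨k, hk⟩ := hmemv' _ this
        exact hwg k hk
      have hle : G.lineGraph.dist u v ≤ 3 := by
        have := SimpleGraph.dist_le (SimpleGraph.Walk.cons hue1 (SimpleGraph.Walk.cons he12
          (SimpleGraph.Walk.cons he2v SimpleGraph.Walk.nil)))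
        simpa using this
      have hd0 : G.lineGraph.dist u v ≠ 0 := by
        intro h0
        rcases SimpleGraph.dist_eq_zero_iff_eq_or_not_reachable.mp h0 with h | h
        · exact huv h
        · exact h ⟨SimpleGraph.Walk.cons hue1 (SimpleGraph.Walk.cons he12
            (SimpleGraph.Walk.cons he2v SimpleGraph.Walk.nil))⟩
      have hd2 : G.lineGraph.dist u v ≠ 2 := by
        intro h2
        obtain ⟨p, hp⟩ := SimpleGraph.exists_walk_of_dist_ne_zero hd0
        rw [h2] at hp
        -- p is a walk of length 2; extract the middle vertex
        set m : G.edgeSet := p.getVert 1 with hm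
        have hum : G.lineGraph.Adj u m := by
          have := p.adj_getVert_succ (i := 0) (by omega)
          rwa [SimpleGraph.Walk.getVert_zero] at this
        have hmv : G.lineGraph.Adj m v := by
          have := p.adj_getVert_succ (i := 1) (by omega)
          rwa [show (1 : ℕ) + 1 = p.length by omega, SimpleGraph.Walk.getVert_length] at this
        obtain ⟨-, w1, hw1u, hw1m⟩ := SimpleGraph.lineGraph_adj_iff_exists.mp hum
        obtain ⟨-, w2, hw2m, hw2v⟩ := SimpleGraph.lineGraph_adj_iff_exists.mp hmv
        obtain ⟨i, rfl⟩ := hmemu' _ hw1u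
        obtain ⟨j, rfl⟩ := hmemv' _ hw2v
        have hne' : f i ≠ g j := hfg i j
        have hms : (m : Sym2 _) = s(f i, g j) :=
          Sym2.eq_of_ne_mem hne' hw1m hw2m (by simp) (by simp)
        have hmem : s(f i, g j) ∈ G.edgeSet := hms ▸ m.2
        have hadj := G.mem_edgeSet.mp hmem
        exact absurd hadj.2 (by rw [hC i j]; exact Set.not_nonempty_empty)
      have hd : G.lineGraph.dist u v = 3 := by omega
      exact ⟨iff_of_false (by change ¬ G.lineGraph.dist u v = _; omega) (fun h => hA h),
        iff_of_false (by change ¬ G.lineGraph.dist u v = _; omega) (fun h => by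
          obtain ⟨-, i, j, hij⟩ := h
          exact (Set.nonempty_iff_ne_empty.mp hij) (hC i j)),
        iff_of_true hd ⟨hfg, hC⟩⟩
end

section
/- Let X have more than two points and let [f₁,f₂] be a vertex of L(Γ(C(X))). Then the eccentricity of [f₁,f₂] in L(Γ(C(X))) equals 2 if Z(f₁) ∪ Z(f₂) = X, and equals 3 otherwise. -/
/-!
For distinct edges `e ≠ e'` of a graph, the line-graph distance is `min d(u, v) + 1` over
endpoints `u ∈ e`, `v ∈ e'`. In `Γ(C(X))` two vertices are at distance at most one iff their
zero sets meet, and any two vertices are at distance at most two through the zero function.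
If `Z(f₁) ∪ Z(f₂) = X` every vertex is within distance one of `f₁` or `f₂`, while the edge
`[f₁ + 2(f₂ - f₁), f₁ + 3(f₂ - f₁)]` shares no endpoint with `[f₁, f₂]`. Otherwise complete
regularity gives `g` vanishing at a point outside `Z(f₁) ∪ Z(f₂)` and equal to `1` on it, and no
endpoint of the edge `[g, 2g]` has a zero in common with `f₁` or `f₂`.
-/

open Set

namespace SimpleGraph

variable {V : Type*} {G : SimpleGraph V}

lemma edist_le_one_of_mem_edgeSet {e : G.edgeSet} {u v : V} (hu : u ∈ (e : Sym2 V))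
    (hv : v ∈ (e : Sym2 V)) : G.edist u v ≤ 1 := by
  rw [edist_le_one_iff_adj_or_eq]
  by_cases huv : u = v
  · exact Or.inr huv
  · have he : (e : Sym2 V) = s(u, v) := (Sym2.mem_and_mem_iff huv).mp ⟨hu, hv⟩
    exact Or.inl (G.mem_edgeSet.mp (he ▸ e.2))

lemma lineGraph_edist_le_one_of_mem {e e' : G.edgeSet} {v : V} (he : v ∈ (e : Sym2 V))
    (he' : v ∈ (e' : Sym2 V)) : G.lineGraph.edist e e' ≤ 1 := by
  rw [edist_le_one_iff_adj_or_eq]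
  by_cases h : e = e'
  · exact Or.inr h
  · exact Or.inl (lineGraph_adj_iff_exists.mpr ⟨h, v, he, he'⟩)

lemma Walk.lineGraph_edist_le_length_add_one {u v : V} (p : G.Walk u v) {e e' : G.edgeSet}
    (hu : u ∈ (e : Sym2 V)) (hv : v ∈ (e' : Sym2 V)) :
    G.lineGraph.edist e e' ≤ p.length + 1 := by
  induction p generalizing e with
  | nil => simpa using lineGraph_edist_le_one_of_mem hu hv
  | @cons u x v hadj q ih =>
    let d : G.edgeSet := ⟨s(u, x), hadj⟩
    calc G.lineGraph.edist e e' ≤ G.lineGraph.edist e d + G.lineGraph.edist d e' :=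
          SimpleGraph.edist_triangle
      _ ≤ 1 + (q.length + 1) :=
          add_le_add (lineGraph_edist_le_one_of_mem hu (Sym2.mem_mk_left u x))
            (ih (e := d) (Sym2.mem_mk_right u x) hv)
      _ = (q.cons hadj).length + 1 := by rw [Walk.length_cons]; push_cast; ring

lemma lineGraph_edist_le_edist_add_one {e e' : G.edgeSet} {u v : V} (hu : u ∈ (e : Sym2 V))
    (hv : v ∈ (e' : Sym2 V)) : G.lineGraph.edist e e' ≤ G.edist u v + 1 := by
  by_cases htop : G.edist u v = ⊤
  · simp [htop]
  obtain ⟨p, hp⟩ := exists_walk_of_edist_ne_top htop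
  rw [← hp]
  exact p.lineGraph_edist_le_length_add_one hu hv

lemma Walk.exists_edist_add_one_le_length {e e' : G.edgeSet} (p : G.lineGraph.Walk e e')
    (hne : e ≠ e') : ∃ u ∈ (e : Sym2 V), ∃ v ∈ (e' : Sym2 V), G.edist u v + 1 ≤ p.length := by
  induction p with
  | nil => exact absurd rfl hne
  | @cons e d e' hadj q ih =>
    obtain ⟨-, c, hce, hcd⟩ := lineGraph_adj_iff_exists.mp hadj
    by_cases hd : d = e'
    · subst hd
      exact ⟨c, hce, c, hcd, by simp⟩
    obtain ⟨u, hu, v, hv, huv⟩ := ih hd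
    refine ⟨c, hce, v, hv, ?_⟩
    calc G.edist c v + 1 ≤ G.edist c u + (G.edist u v + 1) := by
          rw [← add_assoc]; gcongr; exact SimpleGraph.edist_triangle
      _ ≤ 1 + q.length := add_le_add (edist_le_one_of_mem_edgeSet hcd hu) huv
      _ = (q.cons hadj).length := by rw [Walk.length_cons]; push_cast; ring

lemma add_one_le_lineGraph_edist {e e' : G.edgeSet} {n : ℕ∞} (hn : n ≠ 0)
    (h : ∀ u ∈ (e : Sym2 V), ∀ v ∈ (e' : Sym2 V), n ≤ G.edist u v) :
    n + 1 ≤ G.lineGraph.edist e e' := by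
  have hne : e ≠ e' := by
    rintro rfl
    have hu := Sym2.out_fst_mem (e : Sym2 V)
    exact hn (nonpos_iff_eq_zero.mp (by simpa using h _ hu _ hu))
  by_cases htop : G.lineGraph.edist e e' = ⊤
  · simp [htop]
  obtain ⟨p, hp⟩ := exists_walk_of_edist_ne_top htop
  obtain ⟨u, hu, v, hv, huv⟩ := p.exists_edist_add_one_le_length hne
  rw [← hp]
  exact (add_le_add_left (h u hu v hv) 1).trans huv

end SimpleGraph

open SimpleGraph

section zGraph

variable {X : Type*} [TopologicalSpace X]

lemma isClosed_zeroSet (f : C(X, ℝ)) : IsClosed (zeroSet f) :=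
  isClosed_eq f.continuous continuous_const

lemma zGraph_edist_le_one_iff {u v : {f : C(X, ℝ) // (zeroSet f).Nonempty}} :
    (zGraph X).edist u v ≤ 1 ↔ (zeroSet u.1 ∩ zeroSet v.1).Nonempty := by
  rw [edist_le_one_iff_adj_or_eq]
  refine ⟨?_, fun h => ?_⟩
  · rintro (hadj | rfl)
    · exact hadj.2
    · simpa using u.2
  · by_cases huv : u = v
    · exact Or.inr huv
    · exact Or.inl ⟨huv, h⟩

lemma zGraph_edist_le_two (u v : {f : C(X, ℝ) // (zeroSet f).Nonempty}) :
    (zGraph X).edist u v ≤ 2 := by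
  obtain ⟨x, hx⟩ := u.2
  obtain ⟨y, hy⟩ := v.2
  let o : {f : C(X, ℝ) // (zeroSet f).Nonempty} := ⟨0, x, rfl⟩
  calc (zGraph X).edist u v ≤ (zGraph X).edist u o + (zGraph X).edist o v :=
        SimpleGraph.edist_triangle
    _ ≤ 1 + 1 := add_le_add (zGraph_edist_le_one_iff.mpr ⟨x, hx, rfl⟩)
        (zGraph_edist_le_one_iff.mpr ⟨y, rfl, hy⟩)
    _ = 2 := one_add_one_eq_two

lemma zGraph_two_le_edist_of_disjoint {u v : {f : C(X, ℝ) // (zeroSet f).Nonempty}}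
    (h : Disjoint (zeroSet u.1) (zeroSet v.1)) : 2 ≤ (zGraph X).edist u v := by
  have hfar : ¬ (zGraph X).edist u v ≤ 1 := by
    rwa [zGraph_edist_le_one_iff, not_nonempty_iff_eq_empty, ← disjoint_iff_inter_eq_empty]
  exact Order.add_one_le_of_lt (not_le.mp hfar)

lemma lineGraph_zGraph_edist_le_three (e e' : (zGraph X).edgeSet) :
    (zGraph X).lineGraph.edist e e' ≤ 3 :=
  calc _ ≤ (zGraph X).edist e.1.out.1 e'.1.out.1 + 1 :=
        lineGraph_edist_le_edist_add_one (Sym2.out_fst_mem _) (Sym2.out_fst_mem _)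
    _ ≤ 2 + 1 := by gcongr; exact zGraph_edist_le_two _ _
    _ = 3 := by norm_num

lemma lineGraph_zGraph_edist_le_two {e : (zGraph X).edgeSet}
    (he : ∀ x, ∃ u ∈ e.1, x ∈ zeroSet u.1) (e' : (zGraph X).edgeSet) :
    (zGraph X).lineGraph.edist e e' ≤ 2 := by
  obtain ⟨z, hz⟩ := (e'.1.out.1).2
  obtain ⟨u, hu, huz⟩ := he z
  calc _ ≤ (zGraph X).edist u e'.1.out.1 + 1 :=
        lineGraph_edist_le_edist_add_one hu (Sym2.out_fst_mem _)
    _ ≤ 1 + 1 := by gcongr; exact zGraph_edist_le_one_iff.mpr ⟨z, huz, hz⟩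
    _ = 2 := one_add_one_eq_two

lemma zGraph_exists_edge_forall_ne (e : (zGraph X).edgeSet) :
    ∃ e' : (zGraph X).edgeSet, ∀ u ∈ e.1, ∀ v ∈ e'.1, u ≠ v := by
  obtain ⟨e, he⟩ := e
  induction e using Sym2.ind with | _ a b => ?_
  obtain ⟨hab, w, ha, hb⟩ := he
  have hw (t : ℝ) : (a.1 + t • (b.1 - a.1)) w = 0 := by
    simp [show a.1 w = 0 from ha, show b.1 w = 0 from hb]
  let φ (t : ℝ) : {f : C(X, ℝ) // (zeroSet f).Nonempty} := ⟨a.1 + t • (b.1 - a.1), w, hw t⟩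
  have hφ : Function.Injective φ := fun s t hst =>
    smul_left_injective ℝ (sub_ne_zero.mpr (Subtype.coe_injective.ne hab).symm)
      (add_left_cancel (congrArg Subtype.val hst))
  have h0 : φ 0 = a := Subtype.ext (by simp [φ])
  have h1 : φ 1 = b := Subtype.ext (by simp [φ])
  refine ⟨⟨s(φ 2, φ 3), hφ.ne (by norm_num), w, hw 2, hw 3⟩, ?_⟩
  rintro u hu v hv
  rw [Sym2.mem_iff, ← h0, ← h1] at hu
  rw [Sym2.mem_iff] at hv
  rcases hu with rfl | rfl <;> rcases hv with rfl | rfl <;> exact hφ.ne (by norm_num)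

lemma zGraph_exists_edge_disjoint_zeroSet [CompletelyRegularSpace X] {K : Set X}
    (hK : IsClosed K) (hK₀ : K.Nonempty) (hKX : K ≠ univ) :
    ∃ e : (zGraph X).edgeSet, ∀ v ∈ e.1, Disjoint (zeroSet v.1) K := by
  obtain ⟨x, hx⟩ := (ne_univ_iff_exists_notMem K).mp hKX
  obtain ⟨g, hg, hgx, hgK⟩ := CompletelyRegularSpace.completely_regular x K hK hx
  let g' : C(X, ℝ) := ⟨fun y => g y, continuous_subtype_val.comp hg⟩
  have hg'x (c : ℝ) : (c • g') x = 0 := by simp [g', hgx]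
  have hg'K (c : ℝ) {y : X} (hy : y ∈ K) : (c • g') y = c := by simp [g', hgK hy]
  let v (c : ℝ) : {f : C(X, ℝ) // (zeroSet f).Nonempty} := ⟨c • g', x, hg'x c⟩
  obtain ⟨k, hk⟩ := hK₀
  have h12 : v 1 ≠ v 2 := fun h => by
    have := congrArg (fun u : {f : C(X, ℝ) // _} => u.1 k) h
    simp only [v, hg'K _ hk] at this
    norm_num at this
  refine ⟨⟨s(v 1, v 2), h12, x, hg'x 1, hg'x 2⟩, ?_⟩
  intro u hu
  rw [Sym2.mem_iff] at hu
  rcases hu with rfl | rfl <;>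
    exact Set.disjoint_left.mpr fun y (hy : _ = 0) hyK => by
      rw [hg'K _ hyK] at hy; norm_num at hy

end zGraph

theorem lineGraph_eccentricity_general
    (X : Type*) [TopologicalSpace X] [CompletelyRegularSpace X]
    (f : Fin 2 → {f : C(X, ℝ) // (zeroSet f).Nonempty})
    (hf : (zGraph X).Adj (f 0) (f 1)) :
    (zeroSet (f 0).1 ∪ zeroSet (f 1).1 = Set.univ →
      (⨆ e : (zGraph X).edgeSet,
        (zGraph X).lineGraph.edist ⟨s(f 0, f 1), (zGraph X).mem_edgeSet.mpr hf⟩ e) = 2) ∧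
    (zeroSet (f 0).1 ∪ zeroSet (f 1).1 ≠ Set.univ →
      (⨆ e : (zGraph X).edgeSet,
        (zGraph X).lineGraph.edist ⟨s(f 0, f 1), (zGraph X).mem_edgeSet.mpr hf⟩ e) = 3) := by
  set e₀ : (zGraph X).edgeSet := ⟨s(f 0, f 1), (zGraph X).mem_edgeSet.mpr hf⟩
  constructor
  · intro hcover
    have hcover' (x : X) : ∃ u ∈ e₀.1, x ∈ zeroSet u.1 := by
      rcases hcover.symm ▸ mem_univ x with h | h
      exacts [⟨f 0, Sym2.mem_mk_left _ _, h⟩, ⟨f 1, Sym2.mem_mk_right _ _, h⟩]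
    obtain ⟨e, he⟩ := zGraph_exists_edge_forall_ne e₀
    have hfar : 2 ≤ (zGraph X).lineGraph.edist e₀ e :=
      add_one_le_lineGraph_edist one_ne_zero fun u hu v hv =>
        Order.one_le_iff_pos.mpr (edist_pos_of_ne (he u hu v hv))
    exact le_antisymm (iSup_le (lineGraph_zGraph_edist_le_two hcover')) (le_iSup_of_le e hfar)
  · intro hcover
    have he₀ (u) (hu : u ∈ e₀.1) : zeroSet u.1 ⊆ zeroSet (f 0).1 ∪ zeroSet (f 1).1 := by
      rcases Sym2.mem_iff.mp hu with rfl | rfl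
      exacts [subset_union_left, subset_union_right]
    obtain ⟨w, hw, -⟩ := hf.2
    obtain ⟨e, he⟩ := zGraph_exists_edge_disjoint_zeroSet
      ((isClosed_zeroSet _).union (isClosed_zeroSet _)) ⟨w, Or.inl hw⟩ hcover
    have hfar : 3 ≤ (zGraph X).lineGraph.edist e₀ e :=
      add_one_le_lineGraph_edist two_ne_zero fun u hu v hv =>
        zGraph_two_le_edist_of_disjoint ((he v hv).mono_right (he₀ u hu)).symm
    exact le_antisymm (iSup_le (lineGraph_zGraph_edist_le_three e₀)) (le_iSup_of_le e hfar)

/-- For X with more than two points, the eccentricity of a vertex [f₁,f₂] of the line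
graph of Γ(C(X)) is 2 if Z(f₁) ∪ Z(f₂) = X, and 3 otherwise. -/
theorem lineGraph_eccentricity
    (X : Type*) [TopologicalSpace X] [T2Space X] [CompletelyRegularSpace X]
    (hX : ∃ a b c : X, a ≠ b ∧ a ≠ c ∧ b ≠ c)
    (f : Fin 2 → {f : C(X, ℝ) // (zeroSet f).Nonempty})
    (hf : (zGraph X).Adj (f 0) (f 1)) :
    (zeroSet (f 0).1 ∪ zeroSet (f 1).1 = Set.univ →
      (⨆ e : (zGraph X).edgeSet,
        (zGraph X).lineGraph.edist ⟨s(f 0, f 1), (zGraph X).mem_edgeSet.mpr hf⟩ e) = 2) ∧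
    (zeroSet (f 0).1 ∪ zeroSet (f 1).1 ≠ Set.univ →
      (⨆ e : (zGraph X).edgeSet,
        (zGraph X).lineGraph.edist ⟨s(f 0, f 1), (zGraph X).mem_edgeSet.mpr hf⟩ e) = 3) :=
  lineGraph_eccentricity_general X f hf
end

section
/- For any space X with more than one point, the line graph L(Γ(C(X))) is not chordal; that is, L(Γ(C(X))) contains a chordless cycle of length 4. -/
open Set

/-! A completely regular space with two points carries a continuous `F` with `F a = 0 ≠ F b`.
The multiples `c • F` are pairwise distinct and all vanish at `a`, so `Γ(C(X))` contains a complete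
graph, in particular a `4`-cycle. The four edges of a `4`-cycle of any graph form an induced
`4`-cycle of its line graph, since opposite edges of the cycle share no endpoint. -/

theorem not_hasChord_iff_isChordless {V : Type*} {G : SimpleGraph V} {u : V} (w : G.Walk u u) :
    ¬ HasChord G w ↔ w.IsChordless := by
  simp only [HasChord, SimpleGraph.Walk.isChordless_iff_forall_mem_edges, not_exists, not_and,
    not_not]

namespace SimpleGraph

variable {V W : Type*} {G : SimpleGraph V}

theorem Walk.IsChordless.map {H : SimpleGraph W} (f : G ↪g H) {u v : V} {p : G.Walk u v}
    (hp : p.IsChordless) : (p.map f.toHom).IsChordless := by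
  rw [isChordless_iff_forall_mem_edges] at hp ⊢
  simp only [support_map, edges_map, List.mem_map]
  rintro _ _ ⟨x, hx, rfl⟩ ⟨y, hy, rfl⟩ hxy
  exact ⟨s(x, y), hp hx hy (f.map_adj_iff.1 hxy), rfl⟩

theorem cycleGraph.isChordless_cycle_one : (cycleGraph.cycle 1).IsChordless := by
  rw [Walk.isChordless_iff_forall_mem_edges]
  decide +kernel

theorem exists_isCycle_isChordless_of_isIndContained (h : cycleGraph 4 ⊴ G) :
    ∃ (v : V) (p : G.Walk v v), p.IsCycle ∧ p.length = 4 ∧ p.IsChordless := by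
  obtain ⟨f⟩ := h
  exact ⟨_, (cycleGraph.cycle 1).map f.toHom, cycleGraph.isCycle_cycle.map f.injective,
    by simp, cycleGraph.isChordless_cycle_one.map f⟩

def cycleGraph.embeddingLineGraphFour : cycleGraph 4 ↪g (cycleGraph 4).lineGraph where
  toFun i := ⟨s(i, i + 1), by revert i; decide⟩
  inj' := by decide
  map_rel_iff' := by
    intro i j
    rw [lineGraph_adj_iff_exists]
    revert i j
    decide

theorem IsContained.cycleGraph_four_isIndContained_lineGraph (h : cycleGraph 4 ⊑ G) :
    cycleGraph 4 ⊴ G.lineGraph :=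
  cycleGraph.embeddingLineGraphFour.isIndContained.trans h.isIndContained_lineGraph

end SimpleGraph

open SimpleGraph

theorem exists_continuousMap_eq_zero_eq_one (X : Type*) [TopologicalSpace X] [T1Space X]
    [CompletelyRegularSpace X] [Nontrivial X] :
    ∃ (F : C(X, ℝ)) (a b : X), F a = 0 ∧ F b = 1 := by
  obtain ⟨a, b, hab⟩ := exists_pair_ne X
  obtain ⟨f, hf, hfa, hfb⟩ :=
    CompletelyRegularSpace.completely_regular a {b} isClosed_singleton hab
  exact ⟨⟨fun x => f x, continuous_subtype_val.comp hf⟩, a, b, by simp [hfa],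
    by simp [hfb rfl]⟩

theorem completeGraph_isContained_zGraph {X : Type*} [TopologicalSpace X] {F : C(X, ℝ)}
    {a b : X} (ha : F a = 0) (hb : F b ≠ 0) : completeGraph ℝ ⊑ zGraph X := by
  have ha' (c : ℝ) : a ∈ zeroSet (c • F) := by simp [zeroSet, ha]
  have hinj {c d : ℝ} (h : c • F = d • F) : c = d := by
    simpa [hb] using congrArg (fun f : C(X, ℝ) => f b) h
  refine ⟨⟨⟨fun c => ⟨c • F, a, ha' c⟩, fun {c d} hcd => ⟨?_, a, ha' c, ha' d⟩⟩, ?_⟩⟩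
  · exact fun h => hcd (hinj (congrArg Subtype.val h))
  · exact fun c d h => hinj (congrArg Subtype.val h)

/-- For X with more than one point, the line graph of Γ(C(X)) is not chordal: it
contains a chordless cycle of length 4. -/
theorem lineGraph_not_chordal
    (X : Type*) [TopologicalSpace X] [T2Space X] [CompletelyRegularSpace X] [Nontrivial X] :
    ¬ Chordal (zGraph X).lineGraph ∧
      ∃ (e : (zGraph X).edgeSet) (w : (zGraph X).lineGraph.Walk e e),
        w.IsCycle ∧ w.length = 4 ∧ ¬ HasChord (zGraph X).lineGraph w := by
  obtain ⟨F, a, b, ha, hb⟩ := exists_continuousMap_eq_zero_eq_one X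
  have hC4 : cycleGraph 4 ⊑ zGraph X :=
    (isContained_top_iff.2 ⟨Fin.valEmbedding.trans Nat.castEmbedding⟩).trans
      (completeGraph_isContained_zGraph (b := b) ha (by simp [hb]))
  obtain ⟨e, w, hw, hlen, hchordless⟩ :=
    exists_isCycle_isChordless_of_isIndContained hC4.cycleGraph_four_isIndContained_lineGraph
  have hnoChord := (not_hasChord_iff_isChordless w).2 hchordless
  exact ⟨fun h => hnoChord (h e w hw (by omega)), e, w, hw, hlen, hnoChord⟩
end
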